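/- There exists a constant C > 0, depending only on a₁, a₂, ρ₁ and ρ₂, such that for every t > 0 and every x ∈ ℝ, the Lebesgue integral over the second spatial variable satisfies ∫_ℝ |G(t,x,y)| dy ≤ C. -/

import Mathlib

open Real Set Filter MeasureTheory

noncomputable def fPiece (a₁ a₂ y : ℝ) : ℝ :=
  if y ≤ 0 then y / Real.sqrt a₁ else y / Real.sqrt a₂

noncomputable def signFun (y : ℝ) : ℝ :=
  if 0 < y then 1 else if y < 0 then -1 else 0

noncomputable def G (a₁ a₂ β t x y : ℝ) : ℝ :=
  (1 / Real.sqrt (2 * Real.pi * t)) *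
    (if y ≤ 0 then 1 / Real.sqrt a₁ else 1 / Real.sqrt a₂) *
    (Real.exp (-(fPiece a₁ a₂ x - fPiece a₁ a₂ y) ^ 2 / (2 * t)) +
      β * signFun y * Real.exp (-(|fPiece a₁ a₂ x| + |fPiece a₁ a₂ y|) ^ 2 / (2 * t)))

/-!
On each half-line `G(t, x, ·)` is `1/√aᵢ` times a combination of the values of the heat kernel
`k_t` at `f x - y/√aᵢ` and at `|f x| + |y/√aᵢ|`. Since `k_t` decreases in `|u|`, the second value
is at most `k_t(y/√aᵢ)`, so `|G(t, x, y)|` is dominated by `1 + |β|` times a sum of rescaled heat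
kernels. Each rescaled kernel `y ↦ s⁻¹ k_t(c - y/s)` has total mass one, uniformly
in `t > 0` and `c`, which gives the bound `4 (1 + |β|)`.
-/

noncomputable def heatKernel (t u : ℝ) : ℝ :=
  1 / √(2 * π * t) * exp (-u ^ 2 / (2 * t))

namespace heatKernel

lemma nonneg (t u : ℝ) : 0 ≤ heatKernel t u := by
  unfold heatKernel
  positivity

lemma neg (t u : ℝ) : heatKernel t (-u) = heatKernel t u := by
  simp only [heatKernel, neg_sq]

lemma anti_of_abs_le {t u v : ℝ} (ht : 0 ≤ t) (huv : |u| ≤ |v|) :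
    heatKernel t v ≤ heatKernel t u := by
  have hsq : u ^ 2 ≤ v ^ 2 := sq_le_sq.2 huv
  unfold heatKernel
  gcongr

lemma integrable {t : ℝ} (ht : 0 < t) : Integrable (heatKernel t) := by
  have h := (integrable_exp_neg_mul_sq (b := 1 / (2 * t)) (by positivity)).const_mul
    (1 / √(2 * π * t))
  refine h.congr (ae_of_all _ fun u => ?_)
  simp only [heatKernel]
  ring_nf

lemma integral_eq_one {t : ℝ} (ht : 0 < t) : ∫ u, heatKernel t u = 1 := by
  have hexp : ∀ u, heatKernel t u = 1 / √(2 * π * t) * exp (-(1 / (2 * t)) * u ^ 2) := by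
    intro u
    simp only [heatKernel]
    ring_nf
  have hπ : π / (1 / (2 * t)) = 2 * π * t := by
    field_simp
  simp only [hexp, integral_const_mul, integral_gaussian, hπ]
  have : 0 < √(2 * π * t) := by positivity
  field_simp

lemma div_eq_zero_sub_div (t y s : ℝ) : heatKernel t (y / s) = heatKernel t (0 - y / s) := by
  rw [zero_sub, neg]

lemma integrable_comp_sub_div {t : ℝ} (ht : 0 < t) (c : ℝ) {s : ℝ} (hs : s ≠ 0) :
    Integrable (fun y => heatKernel t (c - y / s)) :=
  ((integrable ht).comp_sub_left c).comp_div hs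

lemma integral_comp_sub_div {t : ℝ} (ht : 0 < t) (c s : ℝ) :
    ∫ y, heatKernel t (c - y / s) = |s| := by
  rw [Measure.integral_comp_div (fun u => heatKernel t (c - u)) s,
    integral_sub_left_eq_self (heatKernel t) volume c, integral_eq_one ht, smul_eq_mul, mul_one]

end heatKernel

lemma G_eq_heatKernel (a₁ a₂ β t x y : ℝ) :
    G a₁ a₂ β t x y = (if y ≤ 0 then 1 / √a₁ else 1 / √a₂) *
      (heatKernel t (fPiece a₁ a₂ x - fPiece a₁ a₂ y) +
        β * signFun y * heatKernel t (|fPiece a₁ a₂ x| + |fPiece a₁ a₂ y|)) := by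
  simp only [G, heatKernel]
  ring

lemma abs_signFun_le_one (y : ℝ) : |signFun y| ≤ 1 := by
  unfold signFun
  split_ifs <;> simp

lemma abs_heatKernel_add_mul_le {t : ℝ} (ht : 0 ≤ t) (c v b σ : ℝ) (hσ : |σ| ≤ 1) :
    |heatKernel t (c - v) + b * σ * heatKernel t (|c| + |v|)| ≤
      (1 + |b|) * (heatKernel t (c - v) + heatKernel t v) := by
  have hk₁ := heatKernel.nonneg t (c - v)
  have hk₂ := heatKernel.nonneg t (|c| + |v|)
  have hmono : heatKernel t (|c| + |v|) ≤ heatKernel t v :=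
    heatKernel.anti_of_abs_le ht ((le_add_of_nonneg_left (abs_nonneg c)).trans (le_abs_self _))
  calc |heatKernel t (c - v) + b * σ * heatKernel t (|c| + |v|)|
      ≤ heatKernel t (c - v) + |b| * |σ| * heatKernel t (|c| + |v|) := by
        refine (abs_add_le _ _).trans_eq ?_
        rw [abs_of_nonneg hk₁, abs_mul, abs_mul, abs_of_nonneg hk₂]
    _ ≤ heatKernel t (c - v) + |b| * 1 * heatKernel t v := by gcongr
    _ ≤ (1 + |b|) * (heatKernel t (c - v) + heatKernel t v) := by
        nlinarith [abs_nonneg b, heatKernel.nonneg t v]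

noncomputable def scaledHeatPair (t s c y : ℝ) : ℝ :=
  s⁻¹ * (heatKernel t (c - y / s) + heatKernel t (y / s))

lemma scaledHeatPair_nonneg (t : ℝ) {s : ℝ} (hs : 0 ≤ s) (c y : ℝ) :
    0 ≤ scaledHeatPair t s c y := by
  unfold scaledHeatPair
  have := heatKernel.nonneg t (c - y / s)
  have := heatKernel.nonneg t (y / s)
  positivity

lemma integrable_scaledHeatPair {t : ℝ} (ht : 0 < t) {s : ℝ} (hs : s ≠ 0) (c : ℝ) :
    Integrable (scaledHeatPair t s c) := by
  unfold scaledHeatPair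
  simp only [heatKernel.div_eq_zero_sub_div t _ s]
  exact ((heatKernel.integrable_comp_sub_div ht c hs).add
    (heatKernel.integrable_comp_sub_div ht 0 hs)).const_mul _

lemma integral_scaledHeatPair {t : ℝ} (ht : 0 < t) {s : ℝ} (hs : 0 < s) (c : ℝ) :
    ∫ y, scaledHeatPair t s c y = 2 := by
  simp only [scaledHeatPair, heatKernel.div_eq_zero_sub_div t _ s]
  rw [integral_const_mul, integral_add (heatKernel.integrable_comp_sub_div ht c hs.ne')
    (heatKernel.integrable_comp_sub_div ht 0 hs.ne'), heatKernel.integral_comp_sub_div ht,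
    heatKernel.integral_comp_sub_div ht, abs_of_pos hs]
  field_simp
  norm_num

lemma abs_G_le {a₁ a₂ t : ℝ} (ha₁ : 0 < a₁) (ha₂ : 0 < a₂) (ht : 0 ≤ t) (β x y : ℝ) :
    |G a₁ a₂ β t x y| ≤ (1 + |β|) *
      (scaledHeatPair t (√a₁) (fPiece a₁ a₂ x) y + scaledHeatPair t (√a₂) (fPiece a₁ a₂ x) y) := by
  set c := fPiece a₁ a₂ x
  have h₁ := scaledHeatPair_nonneg t (sqrt_nonneg a₁) c y
  have h₂ := scaledHeatPair_nonneg t (sqrt_nonneg a₂) c y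
  have hb : 0 ≤ 1 + |β| := by positivity
  have hpiece : ∀ s, 0 < s →
      |1 / s * (heatKernel t (c - y / s) + β * signFun y * heatKernel t (|c| + |y / s|))| ≤
        (1 + |β|) * scaledHeatPair t s c y := fun s hs => by
    rw [abs_mul, one_div, abs_inv, abs_of_pos hs, scaledHeatPair, mul_left_comm]
    gcongr
    exact abs_heatKernel_add_mul_le ht c (y / s) β _ (abs_signFun_le_one y)
  rw [G_eq_heatKernel]
  by_cases hy : y ≤ 0
  · rw [if_pos hy, show fPiece a₁ a₂ y = y / √a₁ from if_pos hy]
    nlinarith [hpiece _ (sqrt_pos.2 ha₁)]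
  · rw [if_neg hy, show fPiece a₁ a₂ y = y / √a₂ from if_neg hy]
    nlinarith [hpiece _ (sqrt_pos.2 ha₂)]

theorem G_integral_bound_in_y_general (a₁ a₂ β : ℝ)
    (ha₁ : 0 < a₁) (ha₂ : 0 < a₂) :
    ∃ C : ℝ, 0 < C ∧ ∀ t > (0:ℝ), ∀ x : ℝ,
      (∫ y : ℝ, |G a₁ a₂ β t x y|) ≤ C := by
  refine ⟨4 * (1 + |β|), by positivity, fun t ht x => ?_⟩
  have hs₁ : 0 < √a₁ := sqrt_pos.2 ha₁
  have hs₂ : 0 < √a₂ := sqrt_pos.2 ha₂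
  have hint := ((integrable_scaledHeatPair ht hs₁.ne' (fPiece a₁ a₂ x)).add
    (integrable_scaledHeatPair ht hs₂.ne' (fPiece a₁ a₂ x))).const_mul (1 + |β|)
  calc (∫ y, |G a₁ a₂ β t x y|)
      ≤ ∫ y, (1 + |β|) * (scaledHeatPair t (√a₁) (fPiece a₁ a₂ x) y +
          scaledHeatPair t (√a₂) (fPiece a₁ a₂ x) y) :=
        integral_mono_of_nonneg (ae_of_all _ fun _ => abs_nonneg _) hint
          (ae_of_all _ fun y => abs_G_le ha₁ ha₂ ht.le β x y)
    _ = 4 * (1 + |β|) := by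
        rw [integral_const_mul, integral_add (integrable_scaledHeatPair ht hs₁.ne' _)
          (integrable_scaledHeatPair ht hs₂.ne' _), integral_scaledHeatPair ht hs₁,
          integral_scaledHeatPair ht hs₂]
        ring

theorem G_integral_bound_in_y (a₁ a₂ ρ₁ ρ₂ α β : ℝ)
    (ha₁ : 0 < a₁) (ha₂ : 0 < a₂) (hρ₁ : 0 < ρ₁) (hρ₂ : 0 < ρ₂)
    (hα : α = 1 - ρ₁ * a₁ / (ρ₂ * a₂))
    (hβ : β = (Real.sqrt a₁ + Real.sqrt a₂ * (α - 1)) /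
      (Real.sqrt a₁ - Real.sqrt a₂ * (α - 1))) :
    ∃ C : ℝ, 0 < C ∧ ∀ t > (0:ℝ), ∀ x : ℝ,
      (∫ y : ℝ, |G a₁ a₂ β t x y|) ≤ C :=
  G_integral_bound_in_y_general a₁ a₂ β ha₁ ha₂
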